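/- arXiv:1910.01014 — 5 statements merged into one kernel-verified Lean document; each statement's English description precedes it below -/
import Mathlib

section
/- For a small category A, the two canonical Kan-extension adjunctions between presheaves and copresheaves coincide: the left Kan extension Lan_y y^♯ of the copresheaf embedding along the Yoneda embedding is naturally isomorphic to the right Kan extension Ran_y y^♯, and dually Ran_{y^♯} y ≅ Lan_{y^♯} y; consequently O := Lan_y y^♯ : Set^{A^op} → (Set^A)^op is left adjoint to Spec := Ran_{y^♯} y : (Set^A)^op → Set^{A^op} (the Isbell adjunction). -/
/-!
STATEMENT 0: For a small category `A`, the two canonical Kan-extension adjunctions between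
presheaves and copresheaves coincide: `Lan_y y♯ ≅ Ran_y y♯`, dually `Ran_{y♯} y ≅ Lan_{y♯} y`,
and consequently `O := Lan_y y♯` is left adjoint to `Spec := Ran_{y♯} y` (Isbell adjunction).
-/

universe u

open CategoryTheory Functor Limits

noncomputable section

/-- The copresheaf embedding `y♯ : A ⥤ (Set^A)ᵒᵖ`, `a ↦ A(a, -)`. -/
def ysharp (A : Type u) [SmallCategory A] : A ⥤ (A ⥤ Type u)ᵒᵖ := coyoneda.rightOp

/-!
For any `F : A ⥤ E`, the co-Yoneda lemma makes `X ↦ E(F -, X)` the left Kan extension of `y`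
along `F`, and `X ↦ E(X, F -)` the right Kan extension of `y♯` along `F`. Taking `F = y♯` and
`F = y` gives `Spec ≅ Lan_{y♯} y` and `O ≅ Ran_y y♯`. As a functor into `(Set^A)ᵒᵖ`,
`X ↦ E(X, F -)` preserves colimits, so it carries `𝟭 = Lan_F F` (for dense `F`) to a left Kan
extension of `F ⋙ E(-, F -)`, which is `y♯` when `F` is fully faithful; density of `y` thus
gives `O ≅ Lan_y y♯`. Dually, a copresheaf is canonically the colimit of the representables
mapping to it, which makes `Spec` also `Ran_{y♯} y`. Finally `Lan_y y♯` is left adjoint to the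
nerve `E(y♯ -, ·) = Spec`, as is any Yoneda extension.
-/

namespace CategoryTheory.Functor

variable {A : Type u} [SmallCategory A] {E : Type*} [Category.{u} E] (F : A ⥤ E)

def restrictedYoneda : E ⥤ Aᵒᵖ ⥤ Type u :=
  yoneda ⋙ (whiskeringLeft _ _ _).obj F.op

def restrictedYonedaUnit : yoneda ⟶ F ⋙ F.restrictedYoneda where
  app := yonedaMap F
  naturality _ _ f := by ext; simp [restrictedYoneda]

section

variable {F} {G : E ⥤ Aᵒᵖ ⥤ Type u} (β : yoneda ⟶ F ⋙ G)

lemma map_app_yonedaEquiv {c a : A} (f : c ⟶ a) :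
    (G.map (F.map f)).app (.op c) (yonedaEquiv (β.app c)) = (β.app a).app (.op c) f := by
  rw [← yonedaEquiv_comp, ← Functor.comp_map, ← β.naturality, yonedaEquiv_comp,
    yonedaEquiv_yoneda_map]

def restrictedYonedaDesc : F.restrictedYoneda ⟶ G where
  app X :=
    { app b := ↾fun ψ ↦ (G.map ψ).app b (yonedaEquiv (β.app b.unop))
      naturality b b' g := by
        ext (ψ : F.obj b.unop ⟶ X)
        dsimp [restrictedYoneda]
        rw [Functor.map_comp, NatTrans.comp_app, types_comp_apply, map_app_yonedaEquiv,
          ← NatTrans.naturality_apply, map_yonedaEquiv'] }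
  naturality X Y h := by
    ext b (ψ : F.obj b.unop ⟶ X)
    simp [restrictedYoneda]

lemma restrictedYonedaUnit_comp_whiskerLeft_desc :
    F.restrictedYonedaUnit ≫ whiskerLeft F (restrictedYonedaDesc β) = β := by
  ext a b (f : b.unop ⟶ a)
  exact map_app_yonedaEquiv β f

lemma restrictedYoneda_hom_ext {γ γ' : F.restrictedYoneda ⟶ G}
    (h : F.restrictedYonedaUnit ≫ whiskerLeft F γ = F.restrictedYonedaUnit ≫ whiskerLeft F γ') :
    γ = γ' := by
  refine NatTrans.ext (funext fun X => hom_ext_yoneda fun c p => ?_)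
  obtain ⟨ψ, rfl⟩ : ∃ ψ : F.obj c ⟶ X, yonedaEquiv.symm ψ = p := yonedaEquiv.symm.surjective p
  have hψ : yonedaEquiv.symm ψ = F.restrictedYonedaUnit.app c ≫ F.restrictedYoneda.map ψ :=
    (Equiv.symm_apply_eq _).2 ((Category.id_comp ψ).symm.trans (congrArg (· ≫ ψ) (F.map_id c).symm))
  rw [hψ, Category.assoc, Category.assoc, γ.naturality, γ'.naturality, ← Category.assoc,
    ← Category.assoc]
  exact congrArg (· ≫ G.map ψ) (NatTrans.congr_app h c)

end

instance isLeftKanExtension_restrictedYoneda :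
    F.restrictedYoneda.IsLeftKanExtension F.restrictedYonedaUnit :=
  ⟨⟨IsInitial.ofUniqueHom
    (fun G => StructuredArrow.homMk (restrictedYonedaDesc G.hom)
      (restrictedYonedaUnit_comp_whiskerLeft_desc _))
    (fun _ γ => StructuredArrow.hom_ext _ _ (restrictedYoneda_hom_ext
      ((StructuredArrow.w γ).trans (restrictedYonedaUnit_comp_whiskerLeft_desc _).symm)))⟩⟩

def restrictedCoyoneda : E ⥤ (A ⥤ Type u)ᵒᵖ :=
  (coyoneda ⋙ (whiskeringLeft _ _ _).obj F).rightOp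

def restrictedCoyonedaCounit : F ⋙ F.restrictedCoyoneda ⟶ coyoneda.rightOp where
  app a := Quiver.Hom.op
    { app _ := ↾fun f ↦ F.map f
      naturality _ _ _ := by ext; simp }
  naturality _ _ f := by
    apply Quiver.Hom.unop_inj
    ext
    simp [restrictedCoyoneda]

section

variable {F} {G : E ⥤ (A ⥤ Type u)ᵒᵖ} (β : F ⋙ G ⟶ coyoneda.rightOp)

lemma map_unop_app_coyonedaEquiv {a c : A} (f : a ⟶ c) :
    (G.map (F.map f)).unop.app c (coyonedaEquiv (β.app c).unop) = (β.app a).unop.app c f := by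
  rw [← coyonedaEquiv_comp, ← unop_comp, ← Functor.comp_map, β.naturality, unop_comp,
    coyonedaEquiv_comp]
  exact congrArg ((β.app a).unop.app c) (coyonedaEquiv_coyoneda_map f)

def restrictedCoyonedaLift : G ⟶ F.restrictedCoyoneda where
  app X := Quiver.Hom.op
    { app a := ↾fun s ↦ (G.map s).unop.app a (coyonedaEquiv (β.app a).unop)
      naturality a a' f := by
        ext (s : X ⟶ F.obj a)
        dsimp [restrictedCoyoneda]
        rw [Functor.map_comp, unop_comp, NatTrans.comp_app, types_comp_apply,
          map_unop_app_coyonedaEquiv, ← NatTrans.naturality_apply, map_coyonedaEquiv] }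
  naturality X Y h := by
    apply Quiver.Hom.unop_inj
    ext a (s : Y ⟶ F.obj a)
    simp [restrictedCoyoneda]

lemma whiskerLeft_restrictedCoyonedaLift_comp_counit :
    whiskerLeft F (restrictedCoyonedaLift β) ≫ F.restrictedCoyonedaCounit = β := by
  ext a : 2
  apply Quiver.Hom.unop_inj
  ext c (f : a ⟶ c)
  exact map_unop_app_coyonedaEquiv β f

lemma restrictedCoyoneda_hom_ext {γ γ' : G ⟶ F.restrictedCoyoneda}
    (h : whiskerLeft F γ ≫ F.restrictedCoyonedaCounit =
      whiskerLeft F γ' ≫ F.restrictedCoyonedaCounit) :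
    γ = γ' := by
  have key (γ : G ⟶ F.restrictedCoyoneda) {X : E} {a : A} (s : X ⟶ F.obj a) :
      (γ.app X).unop.app a s =
        (G.map s).unop.app a ((γ.app (F.obj a)).unop.app a (𝟙 (F.obj a))) :=
    (congrArg ((γ.app X).unop.app a) (Category.comp_id s).symm).trans
      (ConcreteCategory.congr_hom
        (NatTrans.congr_app (congrArg Quiver.Hom.unop (γ.naturality s)) a) (𝟙 (F.obj a))).symm
  refine NatTrans.ext (funext fun X => Quiver.Hom.unop_inj ?_)
  ext a (s : X ⟶ F.obj a)
  have hid := ConcreteCategory.congr_hom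
    (NatTrans.congr_app (congrArg Quiver.Hom.unop (NatTrans.congr_app h a)) a) (𝟙 a)
  change (γ.app (F.obj a)).unop.app a (F.map (𝟙 a)) =
    (γ'.app (F.obj a)).unop.app a (F.map (𝟙 a)) at hid
  rw [F.map_id] at hid
  exact (key γ s).trans ((congrArg _ hid).trans (key γ' s).symm)

end

instance isRightKanExtension_restrictedCoyoneda :
    F.restrictedCoyoneda.IsRightKanExtension F.restrictedCoyonedaCounit :=
  ⟨⟨IsTerminal.ofUniqueHom
    (fun G => CostructuredArrow.homMk (restrictedCoyonedaLift G.hom)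
      (whiskerLeft_restrictedCoyonedaLift_comp_counit _))
    (fun _ γ => CostructuredArrow.hom_ext _ _ (restrictedCoyoneda_hom_ext
      ((CostructuredArrow.w γ).trans (whiskerLeft_restrictedCoyonedaLift_comp_counit _).symm)))⟩⟩

instance preservesColimits_restrictedCoyoneda :
    PreservesColimitsOfSize.{u, u} F.restrictedCoyoneda where
  preservesColimitsOfShape {J} _ :=
    preservesColimitsOfShape_rightOp (J := J) (coyoneda ⋙ (whiskeringLeft A E (Type u)).obj F)

instance isIso_restrictedCoyonedaCounit [F.Full] [F.Faithful] :
    IsIso F.restrictedCoyonedaCounit := by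
  have (a : A) : IsIso (F.restrictedCoyonedaCounit.app a).unop := by
    have (c : A) : IsIso ((F.restrictedCoyonedaCounit.app a).unop.app c) :=
      (isIso_iff_bijective _).2 ((FullyFaithful.ofFullyFaithful F).map_bijective a c)
    exact NatIso.isIso_of_isIso_app _
  have (a : A) : IsIso (F.restrictedCoyonedaCounit.app a) := (isIso_unop_iff _).1 inferInstance
  exact NatIso.isIso_of_isIso_app _

instance isLeftKanExtension_restrictedCoyoneda_of_isDense [F.IsDense] [F.Full] [F.Faithful] :
    F.restrictedCoyoneda.IsLeftKanExtension (CategoryTheory.inv F.restrictedCoyonedaCounit) := by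
  have : (𝟭 E ⋙ F.restrictedCoyoneda).IsLeftKanExtension
      (whiskerRight (rightUnitor F).inv F.restrictedCoyoneda ≫ (associator _ _ _).hom) :=
    inferInstance
  refine (isLeftKanExtension_iff_of_iso₂ _ _ (asIso F.restrictedCoyonedaCounit)
    (leftUnitor _) ?_).1 this
  ext a : 2
  simp

variable {F} in
def restrictedYonedaAdjunction [HasColimitsOfSize.{u, u} E] (L : (Aᵒᵖ ⥤ Type u) ⥤ E)
    (α : F ⟶ yoneda ⋙ L) [L.IsLeftKanExtension α] : L ⊣ F.restrictedYoneda :=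
  let e : uliftYoneda.{u} ⋙ 𝟭 _ ≅ yoneda := rightUnitor _ ≪≫ uliftYonedaIsoYoneda
  haveI := (isLeftKanExtension_iff_postcomp₁ (𝟭 _) e α).1 inferInstance
  ((Presheaf.uliftYonedaAdjunction.{u} (𝟭 _ ⋙ L)
    (α ≫ whiskerRight e.inv _ ≫ (associator _ _ _).hom)).ofNatIsoLeft (leftUnitor L)).ofNatIsoRight
    (NatIso.ofComponents fun _ ↦ NatIso.ofComponents fun _ ↦ Equiv.ulift.toIso)

end CategoryTheory.Functor

namespace Isbell

variable (A : Type u) [SmallCategory A]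

abbrev O : (Aᵒᵖ ⥤ Type u) ⥤ (A ⥤ Type u)ᵒᵖ := yoneda.restrictedCoyoneda

abbrev Spec : (A ⥤ Type u)ᵒᵖ ⥤ Aᵒᵖ ⥤ Type u := (ysharp A).restrictedYoneda

-- Restated with `ysharp A` in place of the defeq `coyoneda.rightOp`, which instance search
-- does not unfold.
def oCounit : yoneda ⋙ O A ⟶ ysharp A := yoneda.restrictedCoyonedaCounit

instance isRightKanExtension_O : (O A).IsRightKanExtension (oCounit A) :=
  yoneda.isRightKanExtension_restrictedCoyoneda

instance isIso_oCounit : IsIso (oCounit A) := yoneda.isIso_restrictedCoyonedaCounit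

instance isLeftKanExtension_O : (O A).IsLeftKanExtension (CategoryTheory.inv (oCounit A)) :=
  yoneda.isLeftKanExtension_restrictedCoyoneda_of_isDense

def specCounit : ysharp A ⋙ Spec A ⟶ yoneda where
  app a := { app b := ↾fun (φ : (ysharp A).obj b.unop ⟶ (ysharp A).obj a) ↦ φ.unop.app a (𝟙 a) }
  naturality a a' f := by
    ext b (φ : (ysharp A).obj b.unop ⟶ (ysharp A).obj a)
    exact (congrArg (fun x ↦ φ.unop.app a' x) ((Category.comp_id f).trans
      (Category.id_comp f).symm)).trans (NatTrans.naturality_apply φ.unop f (𝟙 a))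

variable {A} {G : (A ⥤ Type u)ᵒᵖ ⥤ Aᵒᵖ ⥤ Type u} (β : ysharp A ⋙ G ⟶ yoneda)

lemma app_map_ysharp_map {c c' : A} (f : c ⟶ c') {b : Aᵒᵖ}
    (η : (G.obj ((ysharp A).obj c)).obj b) :
    (β.app c').app b ((G.map ((ysharp A).map f)).app b η) = (β.app c).app b η ≫ f :=
  ConcreteCategory.congr_hom (NatTrans.congr_app (β.naturality f) b) η

lemma op_coyonedaEquiv_symm_map {X : (A ⥤ Type u)ᵒᵖ} {c c' : A} (f : c ⟶ c')
    (x : X.unop.obj c) :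
    (coyonedaEquiv.symm (X.unop.map f x)).op = (coyonedaEquiv.symm x).op ≫ (ysharp A).map f :=
  congrArg Quiver.Hom.op (coyonedaEquiv_symm_map f x)

lemma op_coyonedaEquiv_symm_app {X Y : (A ⥤ Type u)ᵒᵖ} (h : X ⟶ Y) {c : A}
    (x : Y.unop.obj c) :
    (coyonedaEquiv.symm (h.unop.app c x)).op = h ≫ (coyonedaEquiv.symm x).op :=
  congrArg Quiver.Hom.op (coyonedaEquiv.injective (by
    rw [Equiv.apply_symm_apply]
    exact (congrArg (fun y ↦ h.unop.app c y) (coyonedaEquiv.apply_symm_apply x)).symm))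

def specLift : G ⟶ Spec A where
  app X :=
    { app b := ↾fun ξ ↦ Quiver.Hom.op
        { app c := ↾fun x ↦ (β.app c).app b ((G.map (coyonedaEquiv.symm x).op).app b ξ)
          naturality c c' f := by
            ext x
            exact ((congrArg (fun φ ↦ (β.app c').app b ((G.map φ).app b ξ))
              (op_coyonedaEquiv_symm_map f x)).trans
              (congrArg (fun F ↦ (β.app c').app b (F.app b ξ)) (G.map_comp _ _))).trans
              (app_map_ysharp_map β f _) }
      naturality b b' g := by
        ext ξ
        apply Quiver.Hom.unop_inj
        ext c x
        exact (congrArg ((β.app c).app b')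
          (NatTrans.naturality_apply (G.map (coyonedaEquiv.symm x).op) g ξ)).trans
          (NatTrans.naturality_apply (β.app c) g _) }
  naturality X Y h := by
    ext b ξ
    apply Quiver.Hom.unop_inj
    ext c x
    exact ((congrArg (fun φ ↦ (β.app c).app b ((G.map φ).app b ξ))
      (op_coyonedaEquiv_symm_app h x)).trans
      (congrArg (fun F ↦ (β.app c).app b (F.app b ξ)) (G.map_comp _ _))).symm

lemma whiskerLeft_specLift_comp_specCounit :
    whiskerLeft (ysharp A) (specLift β) ≫ specCounit A = β := by
  ext a b ξ
  have hid : (coyonedaEquiv.symm (𝟙 a)).op = 𝟙 ((ysharp A).obj a) :=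
    congrArg Quiver.Hom.op ((Equiv.symm_apply_eq _).2 rfl)
  exact (congrArg (fun φ ↦ (β.app a).app b ((G.map φ).app b ξ)) hid).trans
    (congrArg (fun F ↦ (β.app a).app b (F.app b ξ)) (G.map_id _))

lemma Spec_hom_ext {γ γ' : G ⟶ Spec A}
    (h : whiskerLeft (ysharp A) γ ≫ specCounit A = whiskerLeft (ysharp A) γ' ≫ specCounit A) :
    γ = γ' := by
  have key (γ : G ⟶ Spec A) {X : (A ⥤ Type u)ᵒᵖ} {b : Aᵒᵖ} (ξ : (G.obj X).obj b) {c : A}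
      (x : X.unop.obj c) :
      ((γ.app X).app b ξ).unop.app c x = ((whiskerLeft (ysharp A) γ ≫ specCounit A).app c).app b
        ((G.map (coyonedaEquiv.symm x).op).app b ξ) :=
    (congrArg (fun y ↦ ((γ.app X).app b ξ).unop.app c y)
      (coyonedaEquiv.apply_symm_apply x)).symm.trans
      (congrArg (fun φ ↦ φ.unop.app c (𝟙 c)) (ConcreteCategory.congr_hom
        (NatTrans.congr_app (γ.naturality (coyonedaEquiv.symm x).op) b) ξ)).symm
  refine NatTrans.ext (funext fun X => ?_)
  ext b ξ
  apply Quiver.Hom.unop_inj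
  ext c x
  exact (key γ ξ x).trans ((congrArg (fun t ↦ (t.app c).app b
    ((G.map (coyonedaEquiv.symm x).op).app b ξ)) h).trans (key γ' ξ x).symm)

variable (A) in
instance isRightKanExtension_Spec : (Spec A).IsRightKanExtension (specCounit A) :=
  ⟨⟨IsTerminal.ofUniqueHom
    (fun G => CostructuredArrow.homMk (specLift G.hom) (whiskerLeft_specLift_comp_specCounit _))
    (fun _ γ => CostructuredArrow.hom_ext _ _ (Spec_hom_ext
      ((CostructuredArrow.w γ).trans (whiskerLeft_specLift_comp_specCounit _).symm)))⟩⟩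

end Isbell

theorem isbell_duality_coincidence_and_adjunction (A : Type u) [SmallCategory A] :
    Nonempty (yoneda.leftKanExtension (ysharp A) ≅ yoneda.rightKanExtension (ysharp A)) ∧
    Nonempty ((ysharp A).rightKanExtension yoneda ≅ (ysharp A).leftKanExtension yoneda) ∧
    Nonempty (yoneda.leftKanExtension (ysharp A) ⊣ (ysharp A).rightKanExtension yoneda) := by
  have lanIsoO : yoneda.leftKanExtension (ysharp A) ≅ Isbell.O A :=
    leftKanExtensionUnique _ (yoneda.leftKanExtensionUnit _) _
      (CategoryTheory.inv (Isbell.oCounit A))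
  have oIsoRan : Isbell.O A ≅ yoneda.rightKanExtension (ysharp A) :=
    rightKanExtensionUnique _ (Isbell.oCounit A) _ (yoneda.rightKanExtensionCounit _)
  have ranIsoSpec : (ysharp A).rightKanExtension yoneda ≅ Isbell.Spec A :=
    rightKanExtensionUnique _ ((ysharp A).rightKanExtensionCounit _) _ (Isbell.specCounit A)
  have specIsoLan : Isbell.Spec A ≅ (ysharp A).leftKanExtension yoneda :=
    leftKanExtensionUnique _ (ysharp A).restrictedYonedaUnit _ ((ysharp A).leftKanExtensionUnit _)
  exact ⟨⟨lanIsoO ≪≫ oIsoRan⟩, ⟨ranIsoSpec ≪≫ specIsoLan⟩,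
    ⟨(restrictedYonedaAdjunction _ (yoneda.leftKanExtensionUnit _)).ofNatIsoRight
      ranIsoSpec.symm⟩⟩

end
end

section
/- Let i : A ⊂ K be a small full dense subcategory of a cocomplete category K, and let L := Lan_y i : Set^{A^op} → K and R := Lan_i y ≅ K(i−,−) : K → Set^{A^op} be the induced adjunction L ⊣ R. Then composing with the Isbell adjunction swaps the sides: O ∘ R : K → (Set^A)^op is left adjoint to L ∘ Spec : (Set^A)^op → K. -/
/-!
STATEMENT 2: For a small full dense subcategory `i : A ⊂ K` of a cocomplete category `K`,
with induced adjunction `L := Lan_y i ⊣ R := K(i-,-)`, composing with the Isbell adjunction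
swaps the sides: `O ∘ R : K ⥤ (Set^A)ᵒᵖ` is left adjoint to `L ∘ Spec : (Set^A)ᵒᵖ ⥤ K`.
Here `O := Lan_y y♯` and `Spec := Ran_{y♯} y`, and density of `i` means that the
nerve functor `K(i-,-)` (i.e. `Presheaf.restrictedYoneda i`) is fully faithful.
-/

universe v u

universe v₁ u₁ u₂

open CategoryTheory Functor Limits

noncomputable section

/-- The old Mathlib `Presheaf.restrictedYoneda` (removed upstream), with its old meaning:
`E ↦ (c ↦ (A.obj c ⟶ E))`, landing in `Type v₁` without `ULift`. -/
def Presheaf.restrictedYoneda {C : Type u₁} [Category.{v₁} C] {ℰ : Type u₂} [Category.{v₁} ℰ]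
    (A : C ⥤ ℰ) : ℰ ⥤ Cᵒᵖ ⥤ Type v₁ :=
  yoneda ⋙ (whiskeringLeft _ _ (Type v₁)).obj (Functor.op A)

/-!
Write `Spec' := (Set^A)ᵒᵖ(y♯-, -)`, the nerve of `y♯`. Since `O ⊣ Spec'`, the adjunction
`O ∘ R ⊣ L ∘ Spec'` is obtained by restricting `O ⊣ Spec'` along the fully faithful `R`, as
soon as `Spec'` factors through `R` up to the unit of `L ⊣ R`. The unit is invertible on every
object orthogonal to the maps that all `R k` see as isomorphisms (the maps inverted by `L`);
such objects are closed under limits and include the representables `y b ≅ R (i b)`. Finally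
`Spec' P` is the limit of the representables `y b` indexed by the arrows `P ⟶ y♯ b`, which is
also what makes `Spec'` the pointwise right Kan extension `Ran_{y♯} y = Spec`.
-/

open Opposite

namespace CategoryTheory

def Functor.FullyFaithful.compRestrictedYonedaIso {C : Type u₁} [Category.{v₁} C]
    {ℰ : Type u₂} [Category.{v₁} ℰ] {F : C ⥤ ℰ} (hF : F.FullyFaithful) :
    F ⋙ Presheaf.restrictedYoneda F ≅ yoneda :=
  NatIso.ofComponents
    (fun b => NatIso.ofComponents (fun a => hF.homEquiv.symm.toIso) (fun m => by
      ext (g : F.obj _ ⟶ F.obj b)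
      change hF.preimage (F.map m.unop ≫ g) = m.unop ≫ hF.preimage g
      exact hF.map_injective (by simp)))
    (fun g => by
      ext a (f : F.obj _ ⟶ _)
      change hF.preimage (f ≫ F.map g) = hF.preimage f ≫ g
      exact hF.map_injective (by simp))

lemma Adjunction.isIso_unit_app_of_isLocal {C D : Type*} [Category C] [Category D]
    {L : C ⥤ D} {R : D ⥤ C} (adj : L ⊣ R) [R.Full] [R.Faithful] {X : C}
    (hX : (ObjectProperty.isLocal (· ∈ Set.range R.obj)).isLocal X) :
    IsIso (adj.unit.app X) :=
  (ObjectProperty.isLocal_iff_isIso _ _ hX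
    (ObjectProperty.le_isLocal_isLocal _ _ ⟨L.obj X, rfl⟩)).1
    (MorphismProperty.le_isLocal_isLocal _ _ (ObjectProperty.isLocal_adj_unit_app adj X))

end CategoryTheory

def Presheaf.leftKanExtensionYonedaAdjunction {A : Type u} [SmallCategory A]
    {ℰ : Type*} [Category.{u} ℰ] [HasColimitsOfSize.{u, u} ℰ] (F : A ⥤ ℰ) :
    yoneda.leftKanExtension F ⊣ Presheaf.restrictedYoneda F := by
  let Ψ := leftExtensionEquivalenceOfIso₁ (uliftYonedaIsoYoneda.{u} (C := A)).symm F
  let X := LeftExtension.mk (yoneda.leftKanExtension F) (yoneda.leftKanExtensionUnit F)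
  have hX : IsInitial X := (yoneda.leftKanExtension F).isUniversalOfIsLeftKanExtension _
  have : (Ψ.functor.obj X).right.IsLeftKanExtension (Ψ.functor.obj X).hom :=
    ⟨⟨IsInitial.isInitialIffObj Ψ.functor X hX⟩⟩
  exact (Presheaf.uliftYonedaAdjunction.{u} _ (Ψ.functor.obj X).hom).ofNatIsoRight
    (isoWhiskerRight uliftYonedaIsoYoneda.{u} _)

namespace ysharp

variable {A : Type u} [SmallCategory A]

def fullyFaithful (A : Type u) [SmallCategory A] : (ysharp A).FullyFaithful :=
  Coyoneda.fullyFaithful.rightOp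

def homEquiv {P : (A ⥤ Type u)ᵒᵖ} {b : A} : (P ⟶ (ysharp A).obj b) ≃ P.unop.obj b :=
  (opEquiv _ _).trans coyonedaEquiv

lemma homEquiv_symm_map {P : (A ⥤ Type u)ᵒᵖ} {b b' : A} (g : b ⟶ b') (q : P.unop.obj b) :
    homEquiv.symm (P.unop.map g q) = homEquiv.symm q ≫ (ysharp A).map g :=
  congrArg Quiver.Hom.op (coyonedaEquiv_symm_map g q)

def restrictedYonedaCounit : ysharp A ⋙ Presheaf.restrictedYoneda (ysharp A) ⟶ yoneda :=
  (fullyFaithful A).compRestrictedYonedaIso.hom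

def coneLiftApp {P : (A ⥤ Type u)ᵒᵖ}
    (s : Cone (StructuredArrow.proj P (ysharp A) ⋙ (yoneda : A ⥤ Aᵒᵖ ⥤ Type u)))
    (a : Aᵒᵖ) (t : s.pt.obj a) : (ysharp A).obj a.unop ⟶ P :=
  Quiver.Hom.op
    { app b := TypeCat.ofHom fun q => (s.π.app (StructuredArrow.mk (homEquiv.symm q))).app a t
      naturality b b' g := by
        ext q
        have hw := ConcreteCategory.congr_hom
          (congr_app (s.w (StructuredArrow.homMk' (StructuredArrow.mk (homEquiv.symm q)) g)) a) t
        change (s.π.app (StructuredArrow.mk (homEquiv.symm (P.unop.map g q)))).app a t =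
          (s.π.app (StructuredArrow.mk (homEquiv.symm q))).app a t ≫ g
        rw [homEquiv_symm_map]
        exact hw.symm }

def isPointwiseRightKanExtension :
    (RightExtension.mk _ (restrictedYonedaCounit (A := A))).IsPointwiseRightKanExtension :=
  fun P =>
  { lift s :=
      { app a := TypeCat.ofHom (coneLiftApp s a)
        naturality a a' m := by
          ext t
          apply Quiver.Hom.unop_inj
          ext b q
          exact ConcreteCategory.congr_hom ((s.π.app _).naturality m) t }
    fac s f := by
      ext a t
      change (s.π.app (StructuredArrow.mk (homEquiv.symm (homEquiv f.hom)))).app a t = _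
      rw [Equiv.symm_apply_apply]
      rfl
    uniq s m hm := by
      ext a t
      apply Quiver.Hom.unop_inj
      ext b q
      change _ = (s.π.app (StructuredArrow.mk (homEquiv.symm q))).app a t
      rw [← hm]
      change _ = (m.app a t : (ysharp A).obj a.unop ⟶ P).unop.app b (homEquiv (homEquiv.symm q))
      rw [Equiv.apply_symm_apply]
      rfl }

instance : (Presheaf.restrictedYoneda (ysharp A)).IsRightKanExtension restrictedYonedaCounit :=
  isPointwiseRightKanExtension.isRightKanExtension

def rightKanExtensionIso :
    (ysharp A).rightKanExtension yoneda ≅ Presheaf.restrictedYoneda (ysharp A) :=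
  rightKanExtensionUnique _ ((ysharp A).rightKanExtensionCounit yoneda) _ restrictedYonedaCounit

variable {K : Type v} [Category.{u} K] (i : A ⥤ K) [i.Full] [i.Faithful]

lemma isLocal_yoneda_obj (b : A) :
    (ObjectProperty.isLocal (· ∈ Set.range (Presheaf.restrictedYoneda i).obj)).isLocal
      (yoneda.obj b) :=
  ObjectProperty.prop_of_iso _ ((FullyFaithful.ofFullyFaithful i).compRestrictedYonedaIso.app b)
    (ObjectProperty.le_isLocal_isLocal _ _ ⟨i.obj b, rfl⟩)

lemma isLocal_restrictedYoneda_obj (P : (A ⥤ Type u)ᵒᵖ) :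
    (ObjectProperty.isLocal (· ∈ Set.range (Presheaf.restrictedYoneda i).obj)).isLocal
      ((Presheaf.restrictedYoneda (ysharp A)).obj P) :=
  ObjectProperty.prop_of_isLimit _ (isPointwiseRightKanExtension P)
    fun f => isLocal_yoneda_obj i f.right

end ysharp

theorem isbell_swaps_adjunctions
    (A : Type u) [SmallCategory A] {K : Type v} [Category.{u} K]
    [HasColimitsOfSize.{u, u} K]
    -- `i` is a full subcategory of `K` ...
    (i : A ⥤ K) [i.Full] [i.Faithful]
    -- ... which is dense, i.e. the nerve `K(i-,-)` is fully faithful: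
    [(Presheaf.restrictedYoneda i).Full] [(Presheaf.restrictedYoneda i).Faithful] :
    Nonempty ((Presheaf.restrictedYoneda i ⋙ yoneda.leftKanExtension (ysharp A)) ⊣
      ((ysharp A).rightKanExtension yoneda ⋙ yoneda.leftKanExtension i)) := by
  let adjL := Presheaf.leftKanExtensionYonedaAdjunction i
  let adjO := Presheaf.leftKanExtensionYonedaAdjunction (ysharp A)
  let Spec' := Presheaf.restrictedYoneda (ysharp A)
  let unitIso :
      𝟭 _ ⋙ Spec' ≅ (Spec' ⋙ yoneda.leftKanExtension i) ⋙ Presheaf.restrictedYoneda i :=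
    have (P : (A ⥤ Type u)ᵒᵖ) : IsIso ((whiskerLeft Spec' adjL.unit).app P) :=
      adjL.isIso_unit_app_of_isLocal (ysharp.isLocal_restrictedYoneda_obj i P)
    have := NatIso.isIso_of_isIso_app (whiskerLeft Spec' adjL.unit)
    asIso (whiskerLeft Spec' adjL.unit)
  exact ⟨(adjO.restrictFullyFaithful (.ofFullyFaithful _) (.id _) (rightUnitor _).symm
    unitIso).ofNatIsoRight (isoWhiskerRight ysharp.rightKanExtensionIso.symm _)⟩

end
end

section
/- Let F ⊣ U be an adjunction with U : K → Set, let j : K_fin ⊂ K be the full subcategory of objects k with U(k) a finite set, and assume the codensity monad T_j = Ran_j j exists. Then there is a functor Ω : Alg(T_j) → CompHaus from the Eilenberg–Moore category of T_j to compact Hausdorff spaces such that the underlying-set functor CompHaus → Set composed with Ω is naturally isomorphic to U ∘ U_{T_j}, where U_{T_j} : Alg(T_j) → K is the forgetful functor. -/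
namespace CategoryTheory

open Functor Limits

noncomputable section

universe w w₂ v v₂ u u₂

namespace Codensity

variable {C : Type u} [Category.{v} C] {D : Type u₂} [Category.{v₂} D]
  (F : C ⥤ D) [F.HasRightKanExtension F]

/-- The underlying endofunctor of the codensity monad of `F`: the right Kan
extension of `F` along itself. -/
abbrev T : D ⥤ D := F.rightKanExtension F

/-- The counit of the right Kan extension. -/
abbrev ε : F ⋙ T F ⟶ F := F.rightKanExtensionCounit F

/-- The unit of the codensity monad. -/
def unit : 𝟭 D ⟶ T F :=
  (T F).liftOfIsRightKanExtension (ε F) (𝟭 D) F.rightUnitor.hom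

/-- The multiplication of the codensity monad. -/
def mul : T F ⋙ T F ⟶ T F :=
  (T F).liftOfIsRightKanExtension (ε F) (T F ⋙ T F)
    ((Functor.associator F (T F) (T F)).inv ≫ whiskerRight (ε F) (T F) ≫ ε F)

lemma unit_fac (X : C) : (unit F).app (F.obj X) ≫ (ε F).app X = 𝟙 (F.obj X) := by
  simp [unit]

lemma mul_fac (X : C) :
    (mul F).app (F.obj X) ≫ (ε F).app X
      = (T F).map ((ε F).app X) ≫ (ε F).app X := by
  have h := (T F).liftOfIsRightKanExtension_fac_app (ε F)
    (T F ⋙ T F) ((Functor.associator F (T F) (T F)).inv ≫ whiskerRight (ε F) (T F) ≫ ε F) X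
  simp only [NatTrans.comp_app, Functor.associator_inv_app, whiskerRight_app,
    Functor.comp_obj, Category.id_comp] at h
  simpa [mul] using h

lemma left_unit' : whiskerLeft (T F) (unit F) ≫ mul F = (T F).rightUnitor.hom := by
  apply (T F).hom_ext_of_isRightKanExtension (ε F)
  ext X
  have h := (unit F).naturality ((ε F).app X)
  simp only [Functor.comp_obj, Functor.id_obj, Functor.id_map] at h
  simp only [NatTrans.comp_app, whiskerLeft_app, Functor.rightUnitor_hom_app,
    Functor.comp_obj, Functor.id_obj, Category.id_comp, Category.assoc]
  rw [mul_fac, ← Category.assoc, ← h, Category.assoc, unit_fac]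
  simp

lemma right_unit' : whiskerRight (unit F) (T F) ≫ mul F = (T F).leftUnitor.hom := by
  apply (T F).hom_ext_of_isRightKanExtension (ε F)
  ext X
  simp only [NatTrans.comp_app, whiskerRight_app, whiskerLeft_app, Functor.leftUnitor_hom_app,
    Functor.comp_obj, Functor.id_obj, Category.id_comp, Category.assoc]
  rw [mul_fac, ← Category.assoc, ← Functor.map_comp, unit_fac]
  simp

lemma assoc' :
    whiskerRight (mul F) (T F) ≫ mul F
      = (Functor.associator _ _ _).hom ≫ whiskerLeft (T F) (mul F) ≫ mul F := by
  apply (T F).hom_ext_of_isRightKanExtension (ε F)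
  ext X
  have h := (mul F).naturality ((ε F).app X)
  simp only [Functor.comp_obj, Functor.comp_map] at h
  simp only [NatTrans.comp_app, whiskerRight_app, whiskerLeft_app, Functor.associator_hom_app,
    Functor.comp_obj, Category.id_comp, Category.assoc]
  conv_lhs => rw [mul_fac, ← Category.assoc, ← Functor.map_comp, mul_fac, Functor.map_comp,
    Category.assoc]
  conv_rhs => rw [mul_fac, ← Category.assoc, ← h, Category.assoc, mul_fac]

end Codensity

/-- The codensity monad of a functor `F`, defined as the right Kan extension of `F`
along itself, with its canonical monad structure. -/
def codensityMonad {C : Type u} [Category.{v} C] {D : Type u₂} [Category.{v₂} D]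
    (F : C ⥤ D) [F.HasRightKanExtension F] : Monad D where
  toFunctor := Codensity.T F
  η := Codensity.unit F
  μ := Codensity.mul F
  left_unit X := by
    simpa using NatTrans.congr_app (Codensity.left_unit' F) X
  right_unit X := by
    simpa using NatTrans.congr_app (Codensity.right_unit' F) X
  assoc X := by
    simpa using NatTrans.congr_app (Codensity.assoc' F) X

end

end CategoryTheory

universe w' v' u'

open CategoryTheory Functor Limits

noncomputable section

variable {K : Type v'} [Category.{w'} K]

/-- The full subcategory of `K` of the objects whose underlying set is finite. -/
abbrev KFinite (U : K ⥤ Type u') := ObjectProperty.FullSubcategory (fun k : K => Finite (U.obj k))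

/-- The inclusion `j : K_fin ⥤ K`. -/
abbrev jFinite (U : K ⥤ Type u') : KFinite U ⥤ K := ObjectProperty.ι _

/-!
Since `U` is a right adjoint, it carries the right Kan extension `T_j = Ran_j j` to a right
Kan extension `U ∘ T_j = Ran_j (U ∘ j)`. Every ultrafilter on a finite set is principal, so
finite sets are algebras for the ultrafilter monad `β`, naturally; the universal property of
`U ∘ T_j` turns this structure on `U ∘ j` into a comparison `σ : β ∘ U ⟶ U ∘ T_j`. Its unit
and multiplication laws hold because both sides agree after restriction to `K_fin`, where
they reduce to the algebra laws of finite sets. A comparison of this kind lifts `U` to a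
functor from `T_j`-algebras to `β`-algebras, that is, to compacta, which are the compact
Hausdorff spaces.
-/

namespace CategoryTheory

variable {A B C D : Type*} [Category* A] [Category* B] [Category* C] [Category* D]

lemma Functor.isRightKanExtension_of_bijective {L : A ⥤ C} {Φ : A ⥤ B} (R : C ⥤ B)
    (α : L ⋙ R ⟶ Φ)
    (h : ∀ G : C ⥤ B, Function.Bijective fun γ : G ⟶ R ↦ whiskerLeft L γ ≫ α) :
    R.IsRightKanExtension α where
  nonempty_isUniversal := ⟨IsTerminal.ofUniqueHom
    (fun s ↦ CostructuredArrow.homMk _ ((h s.left).2 s.hom).choose_spec)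
    (fun s m ↦ by
      ext1
      exact (h s.left).1 ((CostructuredArrow.w m).trans ((h s.left).2 s.hom).choose_spec.symm))⟩

instance Functor.preservesRightKanExtension_of_isRightAdjoint (G : B ⥤ D) [G.IsRightAdjoint]
    (Φ : A ⥤ B) (L : A ⥤ C) : G.PreservesRightKanExtension Φ L where
  preserves R α _ := by
    let adj := Adjunction.ofIsRightAdjoint G
    refine isRightKanExtension_of_bijective _ _ fun G' ↦ ?_
    -- up to associators, the map is the composite of two adjunction transposes and the
    -- universal property of `R`
    let e : (G' ⟶ R ⋙ G) ≃ (L ⋙ G' ⟶ Φ ⋙ G) :=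
      ((adj.whiskerRight C).homEquiv G' R).symm.trans
        ((R.homEquivOfIsRightKanExtension α (G' ⋙ G.leftAdjoint)).trans
          ((adj.whiskerRight A).homEquiv (L ⋙ G') Φ))
    convert e.bijective with γ
    ext a
    simp only [e, Equiv.trans_apply, homEquivOfIsRightKanExtension]
    rw [Adjunction.homEquiv_unit, Adjunction.homEquiv_counit]
    simp

namespace Monad

variable {T : Monad C} {S : Monad D} {U : C ⥤ D} (σ : U ⋙ S.toFunctor ⟶ T.toFunctor ⋙ U)
  (hη : ∀ X, S.η.app (U.obj X) ≫ σ.app X = U.map (T.η.app X))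
  (hμ : ∀ X, S.μ.app (U.obj X) ≫ σ.app X =
    S.map (σ.app X) ≫ σ.app (T.obj X) ≫ U.map (T.μ.app X))

/-- `(U, σ)` is a lax morphism of monads from `T` to `S` (a monad functor in Street's sense). -/
def algebraFunctorOfLaxHom : T.Algebra ⥤ S.Algebra where
  obj X :=
    { A := U.obj X.A
      a := σ.app X.A ≫ U.map X.a
      unit := by rw [reassoc_of% hη, ← U.map_comp, X.unit, U.map_id]
      assoc := by
        rw [reassoc_of% hμ, ← U.map_comp, X.assoc, U.map_comp, S.map_comp, Category.assoc,
          reassoc_of% σ.naturality X.a] }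
  map f :=
    { f := U.map f.f
      h := by
        dsimp only
        rw [reassoc_of% σ.naturality f.f, Category.assoc, ← U.map_comp, ← U.map_comp, f.h] }

lemma algebraFunctorOfLaxHom_comp_forget :
    algebraFunctorOfLaxHom σ hη hμ ⋙ S.forget = T.forget ⋙ U :=
  rfl

end Monad

end CategoryTheory

namespace Ultrafilter

def pureEquiv (X : Type*) [Finite X] : X ≃ Ultrafilter X :=
  Equiv.ofBijective pure ⟨pure_injective, fun f ↦ (eq_pure_of_finite f).imp fun _ h ↦ h.symm⟩

lemma pureEquiv_symm_pure {X : Type*} [Finite X] (x : X) : (pureEquiv X).symm (pure x) = x :=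
  (pureEquiv X).symm_apply_apply x

instance {X : Type*} [Finite X] : Finite (Ultrafilter X) :=
  .of_equiv X (pureEquiv X)

variable {C : Type*} [Category* C] (P : C ⥤ Type*) [∀ c, Finite (P.obj c)]

def pureInvNatTrans : P ⋙ (ofTypeMonad Ultrafilter).toFunctor ⟶ P where
  app c := TypeCat.ofHom (pureEquiv (P.obj c)).symm
  naturality c c' g := by
    refine TypeCat.homEquiv.injective (funext fun f ↦ ?_)
    obtain ⟨x, rfl⟩ := eq_pure_of_finite f
    change (pureEquiv _).symm (Ultrafilter.map (P.map g) (pure x)) =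
      P.map g ((pureEquiv _).symm (pure x))
    rw [map_pure, pureEquiv_symm_pure, pureEquiv_symm_pure]

lemma η_comp_pureInvNatTrans (c : C) :
    (ofTypeMonad Ultrafilter).η.app (P.obj c) ≫ (pureInvNatTrans P).app c = 𝟙 _ :=
  TypeCat.homEquiv.injective (funext fun x ↦ pureEquiv_symm_pure (X := P.obj c) x)

lemma μ_comp_pureInvNatTrans (c : C) :
    (ofTypeMonad Ultrafilter).μ.app (P.obj c) ≫ (pureInvNatTrans P).app c =
      (ofTypeMonad Ultrafilter).map ((pureInvNatTrans P).app c) ≫ (pureInvNatTrans P).app c := by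
  refine TypeCat.homEquiv.injective (funext fun f ↦ ?_)
  obtain ⟨f, rfl⟩ := eq_pure_of_finite (α := Ultrafilter (P.obj c)) f
  obtain ⟨x, rfl⟩ := eq_pure_of_finite f
  change (pureEquiv _).symm (joinM (pure (pure x))) =
    (pureEquiv _).symm (Ultrafilter.map (pureEquiv _).symm (pure (pure x)))
  rw [joinM_pure, map_pure, pureEquiv_symm_pure, pureEquiv_symm_pure]

end Ultrafilter

namespace CategoryTheory

variable (U : K ⥤ Type u')

instance (c : KFinite U) : Finite ((jFinite U ⋙ U).obj c) := c.property

variable [(jFinite U).HasRightKanExtension (jFinite U)]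

abbrev codensityCounitComp : jFinite U ⋙ Codensity.T (jFinite U) ⋙ U ⟶ jFinite U ⋙ U :=
  (Functor.associator _ _ _).inv ≫ whiskerRight (Codensity.ε (jFinite U)) U

variable [U.IsRightAdjoint]

def codensityComparison :
    U ⋙ (ofTypeMonad Ultrafilter).toFunctor ⟶ Codensity.T (jFinite U) ⋙ U :=
  (Codensity.T (jFinite U) ⋙ U).liftOfIsRightKanExtension (codensityCounitComp U)
    (U ⋙ (ofTypeMonad Ultrafilter).toFunctor) (Ultrafilter.pureInvNatTrans (jFinite U ⋙ U))

lemma codensityComparison_fac (c : KFinite U) :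
    (codensityComparison U).app ((jFinite U).obj c) ≫ U.map ((Codensity.ε (jFinite U)).app c) =
      (Ultrafilter.pureInvNatTrans (jFinite U ⋙ U)).app c := by
  simpa [codensityComparison] using
    (Codensity.T (jFinite U) ⋙ U).liftOfIsRightKanExtension_fac_app
    (codensityCounitComp U) (U ⋙ (ofTypeMonad Ultrafilter).toFunctor)
    (Ultrafilter.pureInvNatTrans (jFinite U ⋙ U)) c

lemma codensityComparison_η (X : K) :
    (ofTypeMonad Ultrafilter).η.app (U.obj X) ≫ (codensityComparison U).app X =
      U.map ((codensityMonad (jFinite U)).η.app X) := by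
  have h : whiskerLeft U (ofTypeMonad Ultrafilter).η ≫ codensityComparison U =
      U.rightUnitor.hom ≫ U.leftUnitor.inv ≫ whiskerRight (Codensity.unit (jFinite U)) U := by
    refine (Codensity.T (jFinite U) ⋙ U).hom_ext_of_isRightKanExtension
      (codensityCounitComp U) _ _ (NatTrans.ext (funext fun c ↦ ?_))
    simp only [NatTrans.comp_app, whiskerLeft_app, whiskerRight_app, associator_inv_app,
      rightUnitor_hom_app, leftUnitor_inv_app, Category.id_comp, Category.assoc]
    rw [codensityComparison_fac, ← U.map_comp, Codensity.unit_fac]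
    simpa using Ultrafilter.η_comp_pureInvNatTrans (jFinite U ⋙ U) c
  simpa [codensityMonad] using congr_app h X

lemma codensityComparison_μ (X : K) :
    (ofTypeMonad Ultrafilter).μ.app (U.obj X) ≫ (codensityComparison U).app X =
      (ofTypeMonad Ultrafilter).map ((codensityComparison U).app X) ≫
        (codensityComparison U).app ((codensityMonad (jFinite U)).obj X) ≫
          U.map ((codensityMonad (jFinite U)).μ.app X) := by
  let σ := codensityComparison U
  have h : whiskerLeft U (ofTypeMonad Ultrafilter).μ ≫ σ =
      (Functor.associator _ _ _).inv ≫ whiskerRight σ (ofTypeMonad Ultrafilter).toFunctor ≫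
        (Functor.associator _ _ _).hom ≫ whiskerLeft (Codensity.T (jFinite U)) σ ≫
          (Functor.associator _ _ _).inv ≫ whiskerRight (Codensity.mul (jFinite U)) U := by
    refine (Codensity.T (jFinite U) ⋙ U).hom_ext_of_isRightKanExtension
      (codensityCounitComp U) _ _ (NatTrans.ext (funext fun c ↦ ?_))
    simp only [NatTrans.comp_app, whiskerLeft_app, whiskerRight_app, associator_inv_app,
      associator_hom_app, Category.id_comp, Category.assoc]
    rw [← U.map_comp, Codensity.mul_fac, U.map_comp, ← reassoc_of% σ.naturality,
      codensityComparison_fac, ← Functor.map_comp_assoc, codensityComparison_fac]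
    exact Ultrafilter.μ_comp_pureInvNatTrans (jFinite U ⋙ U) c
  simpa [codensityMonad] using congr_app h X

def codensityAlgebraToCompactum : (codensityMonad (jFinite U)).Algebra ⥤ Compactum :=
  Monad.algebraFunctorOfLaxHom (codensityComparison U) (codensityComparison_η U)
    (codensityComparison_μ U)

end CategoryTheory

theorem algebras_of_codensity_monad_map_to_compact_hausdorff_spaces
    (F : Type u' ⥤ K) (U : K ⥤ Type u') (adj : F ⊣ U)
    [(jFinite U).HasRightKanExtension (jFinite U)] :
    Nonempty (Σ' Ω : (codensityMonad (jFinite U)).Algebra ⥤ CompHaus.{u'},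
      Ω ⋙ forget CompHaus ≅ (codensityMonad (jFinite U)).forget ⋙ U) :=
  have := adj.isRightAdjoint
  ⟨⟨codensityAlgebraToCompactum U ⋙ compactumToCompHaus,
    Functor.associator _ _ _ ≪≫ isoWhiskerLeft _ compactumToCompHausCompForget ≪≫
      eqToIso (Monad.algebraFunctorOfLaxHom_comp_forget _ _ _)⟩⟩

end
end

section
/- Let U : K → B be a right adjoint between categories, let j : A → K be a functor whose codensity monad T_j = Ran_j j exists, and let U_{T_j} : Alg(T_j) → K be the Eilenberg–Moore forgetful functor. Then, assuming the relevant right Kan extensions exist, there is an isomorphism of endofunctors (indeed of monads) Ran_{U ∘ U_{T_j}} (U ∘ U_{T_j}) ≅ Ran_{U ∘ j} (U ∘ j); in other words, the monad on B induced by the composite adjunction (F_{T_j} ∘ F) ⊣ (U ∘ U_{T_j}) is the codensity monad of U ∘ j. -/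
universe a' a'' b' b'' k' k''

open CategoryTheory Functor Limits

noncomputable section

/-! If `J : C ⥤ Alg(M)` equips the values of `S = J ⋙ forget` with `M`-algebra structures, and
these structure maps exhibit `M` as `Ran_S S`, then the algebra laws say precisely that the
canonical isomorphism `Ran_S S ≅ M` respects units and multiplications.

Let `M = U U_T F_T F`, with `T = T_j`, be the monad of the composite adjunction. Both `U ∘ U_T`
and `U ∘ j` lift to `Alg(M)`: the first through the comparison functor, the second because the
counit of `Ran_j j` makes every `j a` a `T`-algebra. In the first case `M` is
`Ran_{U U_T} (U U_T)` since `Ran_R H = H ∘ L` along any right adjoint `R` with left adjoint `L`.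
In the second, `Ran_{Uj} (Uj) = Ran_U (Ran_j (Uj)) = Ran_U (U T) = U T F` because right adjoints
preserve right Kan extensions. -/

namespace CategoryTheory

universe v₁ v₂ v₃ v₄ u₁ u₂ u₃ u₄

namespace Functor

variable {A : Type u₁} [Category.{v₁} A] {K : Type u₂} [Category.{v₂} K]
  {B : Type u₃} [Category.{v₃} B] {H : Type u₄} [Category.{v₄} H]

lemma isRightKanExtension_of_bijective_s12 (F' : K ⥤ H) {L : A ⥤ K} {F : A ⥤ H}
    (α : L ⋙ F' ⟶ F)
    (h : ∀ G : K ⥤ H, Function.Bijective fun γ : G ⟶ F' => whiskerLeft L γ ≫ α) :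
    F'.IsRightKanExtension α := by
  let e G := Equiv.ofBijective _ (h G)
  refine ⟨⟨IsTerminal.ofUniqueHom
    (fun E => CostructuredArrow.homMk ((e E.left).symm E.hom)
      ((e E.left).apply_symm_apply E.hom)) fun E m => ?_⟩⟩
  apply CostructuredArrow.hom_ext
  exact (e E.left).eq_symm_apply.2 (m.w.trans (Category.comp_id _))

lemma isRightKanExtension_along_comp {j : A ⥤ K} {U : K ⥤ B} {G : A ⥤ H}
    (T : K ⥤ H) (α : j ⋙ T ⟶ G) [T.IsRightKanExtension α]
    (T' : B ⥤ H) (β : U ⋙ T' ⟶ T) [T'.IsRightKanExtension β] :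
    T'.IsRightKanExtension ((associator j U T').hom ≫ whiskerLeft j β ≫ α) :=
  isRightKanExtension_of_bijective_s12 _ _ fun S => by
    have h : (fun γ : S ⟶ T' => whiskerLeft (j ⋙ U) γ ≫
        ((associator j U T').hom ≫ whiskerLeft j β ≫ α)) =
        (T'.homEquivOfIsRightKanExtension β S).trans
          (T.homEquivOfIsRightKanExtension α (U ⋙ S)) := by
      funext γ
      ext X
      simp
    rw [h]
    exact Equiv.bijective _

end Functor

namespace Adjunction

variable {A : Type u₁} [Category.{v₁} A] {K : Type u₂} [Category.{v₂} K]
  {B : Type u₃} [Category.{v₃} B] {H : Type u₄} [Category.{v₄} H]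

lemma isRightKanExtension_leftAdjoint_comp {L : B ⥤ K} {R : K ⥤ B} (adj : L ⊣ R)
    (G : K ⥤ H) : (L ⋙ G).IsRightKanExtension ((adj.whiskerLeft H).counit.app G) :=
  Functor.isRightKanExtension_of_bijective_s12 _ _ fun S =>
    ((adj.whiskerLeft H).homEquiv S G).symm.bijective

lemma isRightKanExtension_comp_rightAdjoint {F : B ⥤ H} {U : H ⥤ B} (adj : F ⊣ U)
    {L : A ⥤ K} {G : A ⥤ H} (T : K ⥤ H) (α : L ⋙ T ⟶ G) [T.IsRightKanExtension α] :
    (T ⋙ U).IsRightKanExtension ((Functor.associator _ _ _).inv ≫ Functor.whiskerRight α U) :=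
  Functor.isRightKanExtension_of_bijective_s12 _ _ fun S => by
    have h : (fun γ : S ⟶ T ⋙ U => Functor.whiskerLeft L γ ≫
        ((Functor.associator _ _ _).inv ≫ Functor.whiskerRight α U)) =
        ((adj.whiskerRight K).homEquiv S T).symm.trans
          ((T.homEquivOfIsRightKanExtension α (S ⋙ F)).trans
            ((adj.whiskerRight A).homEquiv (L ⋙ S) G)) := by
      funext γ
      ext X
      simp only [Equiv.trans_apply, homEquiv_counit]
      rw [homEquiv_unit]
      simp
    rw [h]
    exact Equiv.bijective _

end Adjunction

namespace Monad

variable {B : Type u₁} [Category.{v₁} B] {C : Type u₂} [Category.{v₂} C] (M : Monad B)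
  (J : C ⥤ M.Algebra)

def algebraStructure : (J ⋙ M.forget) ⋙ (M : B ⥤ B) ⟶ J ⋙ M.forget where
  app c := (J.obj c).a
  naturality _ _ f := (J.map f).h

lemma η_app_comp_algebraStructure_app (c : C) :
    M.η.app ((J ⋙ M.forget).obj c) ≫ (M.algebraStructure J).app c = 𝟙 _ :=
  (J.obj c).unit

lemma μ_app_comp_algebraStructure_app (c : C) :
    M.μ.app ((J ⋙ M.forget).obj c) ≫ (M.algebraStructure J).app c =
      M.map ((M.algebraStructure J).app c) ≫ (M.algebraStructure J).app c :=
  (J.obj c).assoc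

end Monad

namespace Codensity

section

variable {B : Type u₁} [Category.{v₁} B] {C : Type u₂} [Category.{v₂} C] {M : Monad B}
  (J : C ⥤ M.Algebra) [(J ⋙ M.forget).HasRightKanExtension (J ⋙ M.forget)]
  [(M : B ⥤ B).IsRightKanExtension (M.algebraStructure J)]

def isoOfIsRightKanExtension : T (J ⋙ M.forget) ≅ (M : B ⥤ B) :=
  rightKanExtensionUnique _ (ε _) _ (M.algebraStructure J)

lemma isoOfIsRightKanExtension_hom_app_comp_algebraStructure_app (c : C) :
    (isoOfIsRightKanExtension J).hom.app ((J ⋙ M.forget).obj c) ≫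
      (M.algebraStructure J).app c = (ε _).app c :=
  ((M : B ⥤ B).liftOfIsRightKanExtension_fac_app (M.algebraStructure J) _ _ c).trans
    (Category.comp_id _)

lemma unit_comp_isoOfIsRightKanExtension_hom :
    unit (J ⋙ M.forget) ≫ (isoOfIsRightKanExtension J).hom = M.η := by
  apply (M : B ⥤ B).hom_ext_of_isRightKanExtension (M.algebraStructure J)
  ext c
  simp only [NatTrans.comp_app, whiskerLeft_app, Category.assoc]
  rw [isoOfIsRightKanExtension_hom_app_comp_algebraStructure_app, unit_fac,
    Monad.η_app_comp_algebraStructure_app]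
  rfl

lemma mul_comp_isoOfIsRightKanExtension_hom :
    mul (J ⋙ M.forget) ≫ (isoOfIsRightKanExtension J).hom =
      (whiskerRight (isoOfIsRightKanExtension J).hom _ ≫
        whiskerLeft _ (isoOfIsRightKanExtension J).hom) ≫ M.μ := by
  apply (M : B ⥤ B).hom_ext_of_isRightKanExtension (M.algebraStructure J)
  ext c
  simp only [NatTrans.comp_app, whiskerLeft_app, whiskerRight_app, Category.assoc]
  -- both sides reduce to `T.map (ε c) ≫ ε c`, the right one by associativity of the algebra
  rw [isoOfIsRightKanExtension_hom_app_comp_algebraStructure_app, mul_fac,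
    Monad.μ_app_comp_algebraStructure_app, ← (isoOfIsRightKanExtension J).hom.naturality_assoc,
    ← Functor.map_comp_assoc, isoOfIsRightKanExtension_hom_app_comp_algebraStructure_app]

end

variable {A : Type u₁} [Category.{v₁} A] {K : Type u₂} [Category.{v₂} K] (j : A ⥤ K)
  [j.HasRightKanExtension j]

def toAlgebra : A ⥤ (codensityMonad j).Algebra where
  obj a :=
    { A := j.obj a
      a := (ε j).app a
      unit := unit_fac j a
      assoc := mul_fac j a }
  map f :=
    { f := j.map f
      h := (ε j).naturality f }

end Codensity

def codensityMonadIsoOfIsRightKanExtension {B : Type u₁} [Category.{v₁} B]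
    {C : Type u₂} [Category.{v₂} C] {M : Monad B} (J : C ⥤ M.Algebra)
    [hS : (J ⋙ M.forget).HasRightKanExtension (J ⋙ M.forget)]
    [(M : B ⥤ B).IsRightKanExtension (M.algebraStructure J)] :
    codensityMonad (J ⋙ M.forget) ≅ M :=
  MonadIso.mk (Codensity.isoOfIsRightKanExtension J)
    (congr_app (Codensity.unit_comp_isoOfIsRightKanExtension_hom J))
    (congr_app (Codensity.mul_comp_isoOfIsRightKanExtension_hom J))

namespace Adjunction

variable {A : Type u₁} [Category.{v₁} A] {K : Type u₂} [Category.{v₂} K]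
  {B : Type u₃} [Category.{v₃} B]

lemma isRightKanExtension_algebraStructure_comparison {L : B ⥤ K} {R : K ⥤ B} (adj : L ⊣ R) :
    (adj.toMonad : B ⥤ B).IsRightKanExtension
      (adj.toMonad.algebraStructure (Monad.comparison adj)) :=
  have := adj.isRightKanExtension_leftAdjoint_comp R
  (isRightKanExtension_iff_of_iso (Iso.refl _) _ _ (by
    ext X
    dsimp [Monad.algebraStructure]
    simp only [Monad.comparison_obj_a, whiskerLeft_counit_app_app]
    exact Category.id_comp _)).1 this

lemma isRightKanExtension_algebraStructure_toAlgebra_comp_comparison {F : B ⥤ K} {U : K ⥤ B}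
    (adj : F ⊣ U) (j : A ⥤ K) [j.HasRightKanExtension j] :
    ((adj.comp (codensityMonad j).adj).toMonad : B ⥤ B).IsRightKanExtension
      ((adj.comp (codensityMonad j).adj).toMonad.algebraStructure
        (Codensity.toAlgebra j ⋙ Monad.comparison (adj.comp (codensityMonad j).adj))) :=
  have := adj.isRightKanExtension_comp_rightAdjoint (Codensity.T j) (Codensity.ε j)
  have := adj.isRightKanExtension_leftAdjoint_comp (Codensity.T j ⋙ U)
  have := Functor.isRightKanExtension_along_comp (Codensity.T j ⋙ U)
    ((Functor.associator _ _ _).inv ≫ Functor.whiskerRight (Codensity.ε j) U)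
    (F ⋙ Codensity.T j ⋙ U) ((adj.whiskerLeft B).counit.app _)
  (isRightKanExtension_iff_of_iso (Iso.refl _) _ _ (by
    ext a
    dsimp [Monad.algebraStructure]
    simp only [Monad.comparison_obj_a, comp_obj, comp_counit_app, Monad.adj_counit,
      Functor.comp_map, Monad.forget_map, whiskerLeft_counit_app_app, Category.id_comp]
    exact (Category.id_comp _).trans (U.map_comp _ _))).1 this

end Adjunction

end CategoryTheory

theorem codensity_of_composite_with_right_adjoint
    {A : Type a'} [Category.{a''} A] {K : Type k'} [Category.{k''} K]
    {B : Type b'} [Category.{b''} B]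
    (F : B ⥤ K) (U : K ⥤ B) (adj : F ⊣ U) (j : A ⥤ K)
    -- the codensity monad of `j` exists, as do the other relevant right Kan extensions:
    [j.HasRightKanExtension j]
    [((codensityMonad j).forget ⋙ U).HasRightKanExtension ((codensityMonad j).forget ⋙ U)]
    [(j ⋙ U).HasRightKanExtension (j ⋙ U)] :
    -- the two codensity monads are isomorphic as monads:
    Nonempty ((codensityMonad ((codensityMonad j).forget ⋙ U) : Monad B)
        ≅ codensityMonad (j ⋙ U)) ∧
    -- equivalently, the monad induced on `B` by the composite adjunction
    -- `(F_{T_j} ∘ F) ⊣ (U ∘ U_{T_j})` is the codensity monad of `U ∘ j`: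
    Nonempty ((adj.comp (codensityMonad j).adj).toMonad ≅ codensityMonad (j ⋙ U)) := by
  let adj' := adj.comp (codensityMonad j).adj
  have := adj'.isRightKanExtension_algebraStructure_comparison
  have := adj.isRightKanExtension_algebraStructure_toAlgebra_comp_comparison j
  -- the instance hypotheses apply only up to unfolding `Monad.comparison` and `Codensity.toAlgebra`
  let e₁ : codensityMonad ((codensityMonad j).forget ⋙ U) ≅ adj'.toMonad :=
    codensityMonadIsoOfIsRightKanExtension (Monad.comparison adj') (hS := ‹_›)
  let e₂ : codensityMonad (j ⋙ U) ≅ adj'.toMonad :=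
    codensityMonadIsoOfIsRightKanExtension (Codensity.toAlgebra j ⋙ Monad.comparison adj')
      (hS := ‹_›)
  exact ⟨⟨e₁ ≪≫ e₂.symm⟩, ⟨e₂.symm⟩⟩
end
end

section
/- Let T be a monad on K and l : A ↪ K a full subcategory on which T is idempotent (every object of A is a fixed point of T, so A embeds fully into Alg(T) via the canonical algebra structure on fixed points, giving j∘k : A → Alg(T)). If this full subcategory is codense in Alg(T), i.e. Ran_{jk}(jk) ≅ id_{Alg(T)}, then T is generically idempotent: the codensity monad Ran_l l exists and T ≅ Ran_l l as monads. -/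
universe a' a'' k' k''

open CategoryTheory Functor Limits

noncomputable section

/-- A functor `F` is codense if the identity functor, equipped with some counit, is a pointwise
right Kan extension of `F` along itself. -/
def IsCodenseFunctor {C : Type*} [Category C] {D : Type*} [Category D] (F : C ⥤ D) : Prop :=
  ∃ α : F ⋙ 𝟭 D ⟶ F,
    Nonempty ((Functor.RightExtension.mk (𝟭 D) α).IsPointwiseRightKanExtension)

variable {K : Type k'} [Category.{k''} K]

/-- A fixed point of a monad carries a canonical algebra structure, given by the inverse
of the unit. -/
def fixedPointAlgebra (T : Monad K) (X : K) (h : IsIso (T.η.app X)) : T.Algebra where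
  A := X
  a := inv (T.η.app X)
  unit := by simp
  assoc := by
    have hμ : T.μ.app X = inv (T.map (T.η.app X)) :=
      IsIso.eq_inv_of_hom_inv_id (T.right_unit X)
    rw [hμ]
    simp

/-- A full subcategory of fixed points of `T` embeds canonically in the category of
`T`-algebras. -/
def fixedFunctor {A : Type a'} [Category.{a''} A] (T : Monad K) (l : A ⥤ K)
    (hfix : ∀ a : A, IsIso (T.η.app (l.obj a))) : A ⥤ T.Algebra where
  obj a := fixedPointAlgebra T (l.obj a) (hfix a)
  map {a b} f :=
    { f := l.map f
      h := by
        have := hfix a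
        have := hfix b
        have hn := T.η.naturality (l.map f)
        simp only [Functor.id_map] at hn
        dsimp [fixedPointAlgebra]
        rw [IsIso.comp_inv_eq, Category.assoc, hn, ← Category.assoc, IsIso.inv_hom_id,
          Category.id_comp] }
  map_id a := by
    apply Monad.Algebra.Hom.ext
    dsimp [fixedPointAlgebra]
    simp
  map_comp f g := by
    apply Monad.Algebra.Hom.ext
    dsimp [fixedPointAlgebra]
    simp


/-!
The monad `T` is the codensity monad of its forgetful functor `U : Alg(T) ⥤ K`, as is the monad
of any adjunction for its right adjoint. Since `U` is a right adjoint it preserves the pointwise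
right Kan extension `𝟭 = Ran_J J` expressing codensity of `J : A ⥤ Alg(T)`, so
`U = Ran_J (J ⋙ U) = Ran_J l`. Pasting the two Kan extensions gives
`T = Ran_U U = Ran_U (Ran_J l) = Ran_l l`, with counit the structure maps `η⁻¹` of the fixed
points; the unit and associativity laws of these algebras are exactly what makes the resulting
isomorphism `T ≅ Ran_l l` a morphism of monads.
-/

namespace CategoryTheory.Functor

variable {C D D' H : Type*} [Category C] [Category D] [Category D'] [Category H]

lemma isRightKanExtension_of_lift {L : C ⥤ D} {F : C ⥤ H} {F' : D ⥤ H} (α : L ⋙ F' ⟶ F)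
    (lift : ∀ G : D ⥤ H, (L ⋙ G ⟶ F) → (G ⟶ F'))
    (fac : ∀ (G : D ⥤ H) (β : L ⋙ G ⟶ F), whiskerLeft L (lift G β) ≫ α = β)
    (hom_ext : ∀ {G : D ⥤ H} (f g : G ⟶ F'), whiskerLeft L f ≫ α = whiskerLeft L g ≫ α → f = g) :
    F'.IsRightKanExtension α :=
  ⟨⟨IsTerminal.ofUniqueHom
    (fun G => CostructuredArrow.homMk (lift G.left G.hom) (fac G.left G.hom))
    (fun G m => CostructuredArrow.hom_ext _ _ <|
      hom_ext _ _ ((CostructuredArrow.w m).trans (fac G.left G.hom).symm))⟩⟩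

lemma isRightKanExtension_comp {L : C ⥤ D} {L' : D ⥤ D'} {F₀ : C ⥤ H} {F₁ : D ⥤ H}
    {F₂ : D' ⥤ H} (α : L ⋙ F₁ ⟶ F₀) (β : L' ⋙ F₂ ⟶ F₁) [F₁.IsRightKanExtension α]
    [F₂.IsRightKanExtension β] :
    F₂.IsRightKanExtension ((associator L L' F₂).hom ≫ whiskerLeft L β ≫ α) := by
  refine isRightKanExtension_of_lift _
    (fun G γ => F₂.liftOfIsRightKanExtension β G
      (F₁.liftOfIsRightKanExtension α (L' ⋙ G) ((associator L L' G).inv ≫ γ)))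
    (fun G γ => ?_) (fun f g h => ?_)
  · ext X
    simp
  · apply F₂.hom_ext_of_isRightKanExtension β
    apply F₁.hom_ext_of_isRightKanExtension α
    ext X
    simpa using congr_app h X

end CategoryTheory.Functor

namespace CategoryTheory.Adjunction

variable {C D : Type*} [Category C] [Category D] {F : C ⥤ D} {G : D ⥤ C} (adj : F ⊣ G)

def codensityCounit : G ⋙ F ⋙ G ⟶ G :=
  (associator G F G).inv ≫ whiskerRight adj.counit G ≫ G.leftUnitor.hom

@[simp]
lemma codensityCounit_app (Y : D) :
    adj.codensityCounit.app Y = G.map (adj.counit.app Y) := by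
  simp [codensityCounit]

lemma app_eq_map_unit_comp_codensityCounit {H : C ⥤ C} (f : H ⟶ F ⋙ G) (X : C) :
    f.app X =
      H.map (adj.unit.app X) ≫ (whiskerLeft G f ≫ adj.codensityCounit).app (F.obj X) := by
  have := f.naturality (adj.unit.app X)
  simp only [Functor.comp_obj, Functor.comp_map, Functor.id_obj] at this
  simp [reassoc_of% this, ← G.map_comp]

instance isRightKanExtension_codensityCounit :
    (F ⋙ G).IsRightKanExtension adj.codensityCounit := by
  refine Functor.isRightKanExtension_of_lift _
    (fun H γ =>
      { app X := H.map (adj.unit.app X) ≫ γ.app (F.obj X)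
        naturality X Y f := by
          have := γ.naturality (F.map f)
          simp only [Functor.comp_obj, Functor.comp_map] at this ⊢
          rw [Category.assoc, ← this, ← H.map_comp_assoc, ← H.map_comp_assoc,
            adj.unit_naturality] })
    (fun H γ => ?_) (fun f g h => ?_)
  · ext Y
    have := γ.naturality (adj.counit.app Y)
    simp only [Functor.comp_obj, Functor.comp_map, Functor.id_obj] at this
    simp [← this, ← H.map_comp_assoc]
  · ext X
    rw [app_eq_map_unit_comp_codensityCounit adj f, app_eq_map_unit_comp_codensityCounit adj g, h]

end CategoryTheory.Adjunction

lemma IsCodenseFunctor.isRightKanExtension_id_of_isRightAdjoint {C D E : Type*} [Category C]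
    [Category D] [Category E] {J : C ⥤ D} [J.Full] [J.Faithful] (hJ : IsCodenseFunctor J)
    (G : D ⥤ E) [G.IsRightAdjoint] : G.IsRightKanExtension (𝟙 (J ⋙ G)) := by
  obtain ⟨α, ⟨hα⟩⟩ := hJ
  have : IsIso α := hα.isIso_hom
  have : (𝟭 D ⋙ G).IsRightKanExtension ((Functor.associator _ _ _).inv ≫ whiskerRight α G) :=
    (RightExtension.isPointwiseRightKanExtensionEquivOfIso
      (RightExtension.postcompose₂ObjMkIso G α) (hα.postcompose G)).isRightKanExtension
  refine (isRightKanExtension_iff_of_iso₂ _ _ (isoWhiskerRight (asIso α) G).symm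
    G.leftUnitor ?_).1 this
  ext X
  simp

namespace CategoryTheory.Monad

variable {C D : Type*} [Category C] [Category D] {T : Monad D} {J : C ⥤ T.Algebra}
  [(J ⋙ T.forget).HasRightKanExtension (J ⋙ T.forget)]
  (c : (J ⋙ T.forget) ⋙ T.toFunctor ⟶ J ⋙ T.forget) [T.toFunctor.IsRightKanExtension c]

def isoCodensityMonad (hc : ∀ X, c.app X = (J.obj X).a) : T ≅ codensityMonad (J ⋙ T.forget) :=
  let e := rightKanExtensionUnique T.toFunctor c (Codensity.T _) (Codensity.ε _)
  have e_fac (X : C) :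
      e.hom.app ((J ⋙ T.forget).obj X) ≫ (Codensity.ε _).app X = c.app X := by
    simpa [e] using
      (Codensity.T _).liftOfIsRightKanExtension_fac_app (Codensity.ε _) T.toFunctor c X
  MonadIso.mk e
    (fun Y => by
      refine congr_app (?_ : T.η ≫ e.hom = Codensity.unit _) Y
      apply (Codensity.T _).hom_ext_of_isRightKanExtension (Codensity.ε _)
      ext X
      simp only [NatTrans.comp_app, whiskerLeft_app, Category.assoc, e_fac, Codensity.unit_fac]
      rw [hc]
      exact (J.obj X).unit)
    (fun Y => by
      refine congr_app (?_ : T.μ ≫ e.hom = (whiskerRight e.hom T.toFunctor ≫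
        whiskerLeft (Codensity.T (J ⋙ T.forget)) e.hom) ≫ Codensity.mul (J ⋙ T.forget)) Y
      apply (Codensity.T _).hom_ext_of_isRightKanExtension (Codensity.ε _)
      ext X
      have e_nat : e.hom.app ((Codensity.T _).obj ((J ⋙ T.forget).obj X)) ≫
          (Codensity.T _).map ((Codensity.ε _).app X) =
            T.map ((Codensity.ε _).app X) ≫ e.hom.app ((J ⋙ T.forget).obj X) :=
        (e.hom.naturality _).symm
      simp only [NatTrans.comp_app, whiskerLeft_app, whiskerRight_app, Category.assoc, e_fac,
        Codensity.mul_fac]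
      rw [← Category.assoc (e.hom.app _), e_nat, Category.assoc, e_fac, ← T.map_comp_assoc,
        e_fac, hc]
      exact (J.obj X).assoc)

end CategoryTheory.Monad

section

variable {A : Type a'} [Category.{a''} A] (T : Monad K) (l : A ⥤ K)
  (hfix : ∀ a : A, IsIso (T.η.app (l.obj a)))

instance [l.Faithful] : (fixedFunctor T l hfix).Faithful where
  map_injective h := l.map_injective (congrArg Monad.Algebra.Hom.f h)

instance [l.Full] : (fixedFunctor T l hfix).Full where
  map_surjective g := ⟨l.preimage g.f, Monad.Algebra.Hom.ext (l.map_preimage g.f)⟩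

end

theorem generically_idempotent_of_codense_fixed_subcategory
    {A : Type a'} [Category.{a''} A] (T : Monad K)
    -- `l` is a full subcategory of `K` ...
    (l : A ⥤ K) [l.Full] [l.Faithful]
    -- ... on which `T` is idempotent, i.e. consisting of fixed points of `T`:
    (hfix : ∀ a : A, IsIso (T.η.app (l.obj a)))
    -- which is codense in the category of `T`-algebras:
    (hcodense : IsCodenseFunctor (fixedFunctor T l hfix)) :
    -- then the codensity monad of `l` exists and `T` is isomorphic to it as a monad:
    ∃ h : l.HasRightKanExtension l, Nonempty (T ≅ @codensityMonad _ _ _ _ l h) := by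
  let J := fixedFunctor T l hfix
  have hU : T.forget.IsRightKanExtension (𝟙 (J ⋙ T.forget)) :=
    hcodense.isRightKanExtension_id_of_isRightAdjoint T.forget
  let c : (J ⋙ T.forget) ⋙ T.free ⋙ T.forget ⟶ J ⋙ T.forget :=
    (Functor.associator _ _ _).hom ≫ whiskerLeft J T.adj.codensityCounit ≫ 𝟙 _
  have hc (a : A) : c.app a = (J.obj a).a := by
    simp only [c, NatTrans.comp_app, Functor.associator_hom_app, whiskerLeft_app,
      Adjunction.codensityCounit_app, Monad.adj_counit, Category.id_comp, Category.comp_id]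
    rfl
  have hT : T.toFunctor.IsRightKanExtension c :=
    Functor.isRightKanExtension_comp (F₂ := T.free ⋙ T.forget) _ _
  have hR : (J ⋙ T.forget).HasRightKanExtension (J ⋙ T.forget) := .mk T.toFunctor c
  exact ⟨hR, ⟨Monad.isoCodensityMonad c hc⟩⟩
end
end
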